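/- arXiv:math/0409411 — 2 statements merged into one kernel-verified Lean document; each statement's English description precedes it below -/
import Mathlib

section
/- Let I be a finite set, H a finite set with maps out, inc : H → I, let (V_i)_{i∈I} and (D_i)_{i∈I} be families of finite-dimensional complex vector spaces, and let x_h : V_{out(h)} → V_{inc(h)} (h ∈ H) and t_i : V_i → D_i (i ∈ I) be linear maps such that the pair (x,t) is stable. If g_i : V_i → V_i (i ∈ I) are linear automorphisms satisfying g_{inc(h)} ∘ x_h = x_h ∘ g_{out(h)} for all h ∈ H and t_i ∘ g_i = t_i for all i ∈ I, then g_i = id_{V_i} for all i ∈ I. (That is, the stabilizer in G_V = ∏_i GL(V_i) of any stable point (x,t) is trivial.) -/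
/-!
For `g` in the stabilizer, the subspaces `range (g i - 1)` form an `x`-invariant family
killed by `t`, because `x` intertwines `g` with itself and `t ∘ g = t`. Stability forces
them to vanish, i.e. `g i = 1`.
-/

/-- A pair `(x, t)` of quiver data is *stable* if the only family of subspaces
`S i ⊆ V i` with `x h (S (out h)) ⊆ S (inc h)` for all `h` and `t i (S i) = 0` for all `i`
is the zero family. -/
def IsStablePair {I H : Type*} (out inc : H → I)
    (V : I → Type*) [∀ i, AddCommGroup (V i)] [∀ i, Module ℂ (V i)]
    (D : I → Type*) [∀ i, AddCommGroup (D i)] [∀ i, Module ℂ (D i)]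
    (x : ∀ h, V (out h) →ₗ[ℂ] V (inc h)) (t : ∀ i, V i →ₗ[ℂ] D i) : Prop :=
  ∀ S : ∀ i, Submodule ℂ (V i),
    (∀ h, ∀ v ∈ S (out h), x h v ∈ S (inc h)) →
    (∀ i, ∀ v ∈ S i, t i v = 0) →
    ∀ i, S i = ⊥

section RangeSubId

variable {R M N : Type*} [Ring R] [AddCommGroup M] [Module R M] [AddCommGroup N] [Module R N]

theorem LinearMap.map_mem_range_sub_id_of_comm (f : M →ₗ[R] N) {g : M →ₗ[R] M}
    {g' : N →ₗ[R] N} (hfg : ∀ v, g' (f v) = f (g v)) {v : M}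
    (hv : v ∈ range (g - LinearMap.id)) : f v ∈ range (g' - LinearMap.id) := by
  obtain ⟨w, rfl⟩ := hv
  exact ⟨f w, by simp [hfg]⟩

theorem LinearMap.range_sub_id_le_ker_of_comp_eq (t : M →ₗ[R] N) {g : M →ₗ[R] M}
    (htg : ∀ v, t (g v) = t v) : range (g - LinearMap.id) ≤ ker t := by
  rintro _ ⟨w, rfl⟩
  simp [htg]

end RangeSubId

theorem stabilizer_of_stable_point_trivial_general
    {I H : Type*} (out inc : H → I)
    (V : I → Type*) [∀ i, AddCommGroup (V i)] [∀ i, Module ℂ (V i)]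
    (D : I → Type*) [∀ i, AddCommGroup (D i)] [∀ i, Module ℂ (D i)]
    (x : ∀ h, V (out h) →ₗ[ℂ] V (inc h)) (t : ∀ i, V i →ₗ[ℂ] D i)
    (hstable : IsStablePair out inc V D x t)
    (g : ∀ i, V i ≃ₗ[ℂ] V i)
    (hgx : ∀ h, ∀ v : V (out h), g (inc h) (x h v) = x h (g (out h) v))
    (hgt : ∀ i, ∀ v : V i, t i (g i v) = t i v) :
    ∀ i, ∀ v : V i, g i v = v := by
  intro i v
  have hrange : LinearMap.range ((g i : V i →ₗ[ℂ] V i) - LinearMap.id) = ⊥ :=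
    hstable (fun j => LinearMap.range ((g j : V j →ₗ[ℂ] V j) - LinearMap.id))
      (fun h _ hv => (x h).map_mem_range_sub_id_of_comm (hgx h) hv)
      (fun j _ hv => (t j).range_sub_id_le_ker_of_comp_eq (hgt j) hv) i
  have hv : g i v - v ∈ LinearMap.range ((g i : V i →ₗ[ℂ] V i) - LinearMap.id) := ⟨v, rfl⟩
  rw [hrange, Submodule.mem_bot, sub_eq_zero] at hv
  exact hv

/-- If `(x, t)` is stable and `g = (g_i)` is a family of linear
automorphisms with `g (inc h) ∘ x h = x h ∘ g (out h)` for all `h` and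
`t i ∘ g i = t i` for all `i`, then `g i` is the identity for every `i`:
the stabilizer in `G_V = ∏ GL(V_i)` of a stable point is trivial. -/
theorem stabilizer_of_stable_point_trivial
    {I H : Type*} (out inc : H → I)
    (V : I → Type*) [∀ i, AddCommGroup (V i)] [∀ i, Module ℂ (V i)]
    [∀ i, FiniteDimensional ℂ (V i)]
    (D : I → Type*) [∀ i, AddCommGroup (D i)] [∀ i, Module ℂ (D i)]
    [∀ i, FiniteDimensional ℂ (D i)]
    (x : ∀ h, V (out h) →ₗ[ℂ] V (inc h)) (t : ∀ i, V i →ₗ[ℂ] D i)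
    (hstable : IsStablePair out inc V D x t)
    (g : ∀ i, V i ≃ₗ[ℂ] V i)
    (hgx : ∀ h, ∀ v : V (out h), g (inc h) (x h v) = x h (g (out h) v))
    (hgt : ∀ i, ∀ v : V i, t i (g i v) = t i v) :
    ∀ i, ∀ v : V i, g i v = v :=
  stabilizer_of_stable_point_trivial_general out inc V D x t hstable g hgx hgt
end

section
/- Let I be a finite set, H a finite set with maps out, inc : H → I, a fixed-point-free involution h ↦ h̄ with out(h̄) = inc(h) and inc(h̄) = out(h), and ε : H → {1, −1} with ε(h̄) = −ε(h). Let (V_i)_{i∈I} be finite-dimensional complex vector spaces, let ⟨x,y⟩ = Σ_{h∈H} ε(h)·tr(x_h ∘ y_{h̄}), and define, for a = (a_i)_{i∈I} with a_i ∈ End(V_i) and x ∈ E_V, the family [a,x] ∈ E_V by [a,x]_h = a_{inc(h)} ∘ x_h − x_h ∘ a_{out(h)}, and the moment map components ψ_i(x) = Σ_{h∈H : inc(h)=i} ε(h)·x_h ∘ x_{h̄} ∈ End(V_i). Then for all such a and all x ∈ E_V, ⟨[a,x], x⟩ = 2·Σ_{i∈I} tr(a_i ∘ ψ_i(x)). 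-/
/-!
Expanding the bracket writes `⟨[a, x], x⟩` as `∑_h ε(h) tr (a_{inc h} x_h x_{h̄})` minus
`∑_h ε(h) tr (x_h a_{out h} x_{h̄})`. By cyclicity of the trace the `h`-term of the second sum is
the `h̄`-term of the first, and `ε(h̄) = -ε(h)`, so reindexing along the involution `h ↦ h̄` shows
that the second sum is minus the first. Grouping the first sum by the vertex `inc h` turns it
into `∑_i tr (a_i ψ_i(x))`.
-/

/-- The symplectic form `⟨x, y⟩ = ∑_{h ∈ H} ε h · tr (x h ∘ y (bar h))` on `E_V`. -/
noncomputable def quiverForm {I H : Type*} [Fintype H]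
    (out inc : H → I) (bar : H → H) (eps : H → ℤ)
    (V : I → Type*) [∀ i, AddCommGroup (V i)] [∀ i, Module ℂ (V i)]
    (hbar_out : ∀ h, out (bar h) = inc h) (hbar_inc : ∀ h, inc (bar h) = out h)
    (x y : ∀ h, V (out h) →ₗ[ℂ] V (inc h)) : ℂ :=
  ∑ h : H, (eps h : ℂ) *
    LinearMap.trace ℂ (V (inc h))
      ((x h).comp
        (cast (by rw [hbar_out h, hbar_inc h]) (y (bar h)) : V (inc h) →ₗ[ℂ] V (out h)))

/-- The `i`-th component `ψ_i (x) = ∑_{h : inc h = i} ε h · x h ∘ x (bar h)` of the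
moment map on `E_V`. -/
noncomputable def quiverMomentMap {I H : Type*} [Fintype H] [DecidableEq I]
    (out inc : H → I) (bar : H → H) (eps : H → ℤ)
    (V : I → Type*) [∀ i, AddCommGroup (V i)] [∀ i, Module ℂ (V i)]
    (hbar_out : ∀ h, out (bar h) = inc h) (hbar_inc : ∀ h, inc (bar h) = out h)
    (x : ∀ h, V (out h) →ₗ[ℂ] V (inc h)) (i : I) : V i →ₗ[ℂ] V i :=
  ∑ h : {h : H // inc h = i}, (eps h.1 : ℂ) •
    (cast (by rw [h.2])
      ((x h.1).comp
        (cast (by rw [hbar_out h.1, hbar_inc h.1]) (x (bar h.1)) :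
          V (inc h.1) →ₗ[ℂ] V (out h.1))) : V i →ₗ[ℂ] V i)

open LinearMap

section Transport

variable {R I : Type*} {V : I → Type*} [∀ i, AddCommGroup (V i)]

theorem LinearMap.comp_congr_heq [Semiring R] [∀ i, Module R (V i)] {i i' j j' k k' : I}
    (hi : i = i') (hj : j = j') (hk : k = k')
    {f : V j →ₗ[R] V k} {f' : V j' →ₗ[R] V k'} (hf : f ≍ f')
    {g : V i →ₗ[R] V j} {g' : V i' →ₗ[R] V j'} (hg : g ≍ g') :
    f.comp g ≍ f'.comp g' := by
  subst hi hj hk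
  rw [eq_of_heq hf, eq_of_heq hg]

variable (V) in
theorem trace_comp_congr_heq [CommRing R] [∀ i, Module R (V i)] (a : ∀ i, V i →ₗ[R] V i)
    {i i' : I} (hi : i = i') {f : V i →ₗ[R] V i} {f' : V i' →ₗ[R] V i'} (hf : f ≍ f') :
    trace R (V i) ((a i).comp f) = trace R (V i') ((a i').comp f') := by
  subst hi
  rw [eq_of_heq hf]

end Transport

section Quiver

variable {I H : Type*} (out inc : H → I) (bar : H → H) (eps : H → ℤ)
  (V : I → Type*) [∀ i, AddCommGroup (V i)] [∀ i, Module ℂ (V i)]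
  (hbar_out : ∀ h, out (bar h) = inc h) (hbar_inc : ∀ h, inc (bar h) = out h)

def quiverOpposite (x : ∀ h, V (out h) →ₗ[ℂ] V (inc h)) (h : H) : V (inc h) →ₗ[ℂ] V (out h) :=
  cast (by rw [hbar_out h, hbar_inc h]) (x (bar h))

theorem quiverForm_sub_left [Fintype H] (x y z : ∀ h, V (out h) →ₗ[ℂ] V (inc h)) :
    quiverForm out inc bar eps V hbar_out hbar_inc (fun h => y h - z h) x
      = quiverForm out inc bar eps V hbar_out hbar_inc y x
        - quiverForm out inc bar eps V hbar_out hbar_inc z x := by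
  simp only [quiverForm, sub_comp, map_sub, mul_sub, Finset.sum_sub_distrib]

theorem trace_comp_quiverMomentMap [Fintype H] [DecidableEq I] (a : ∀ i, V i →ₗ[ℂ] V i)
    (x : ∀ h, V (out h) →ₗ[ℂ] V (inc h)) (i : I) :
    trace ℂ (V i) ((a i).comp (quiverMomentMap out inc bar eps V hbar_out hbar_inc x i))
      = ∑ h : {h : H // inc h = i}, (eps h.1 : ℂ) * trace ℂ (V (inc h.1))
          (((a (inc h.1)).comp (x h.1)).comp
            (quiverOpposite out inc bar V hbar_out hbar_inc x h.1)) := by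
  simp only [quiverMomentMap, ← Module.End.mul_eq_comp, Finset.mul_sum, mul_smul_comm, map_sum,
    map_smul, smul_eq_mul]
  refine Finset.sum_congr rfl fun h _ => congrArg _ ?_
  rw [Module.End.mul_eq_comp, comp_assoc]
  exact trace_comp_congr_heq V a h.2.symm (cast_heq _ _)

theorem quiverForm_comp_left [Fintype I] [Fintype H] [DecidableEq I] (a : ∀ i, V i →ₗ[ℂ] V i)
    (x : ∀ h, V (out h) →ₗ[ℂ] V (inc h)) :
    quiverForm out inc bar eps V hbar_out hbar_inc (fun h => (a (inc h)).comp (x h)) x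
      = ∑ i : I, trace ℂ (V i)
          ((a i).comp (quiverMomentMap out inc bar eps V hbar_out hbar_inc x i)) := by
  rw [quiverForm, ← Fintype.sum_fiberwise inc]
  refine Finset.sum_congr rfl fun i _ => ?_
  rw [trace_comp_quiverMomentMap]
  rfl

theorem trace_comp_quiverOpposite_bar [∀ i, FiniteDimensional ℂ (V i)]
    (hbar_invol : Function.Involutive bar) (a : ∀ i, V i →ₗ[ℂ] V i)
    (x : ∀ h, V (out h) →ₗ[ℂ] V (inc h)) (h : H) :
    trace ℂ (V (inc (bar h)))
        (((x (bar h)).comp (a (out (bar h)))).comp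
          (quiverOpposite out inc bar V hbar_out hbar_inc x (bar h)))
      = trace ℂ (V (inc h))
          (((a (inc h)).comp (x h)).comp (quiverOpposite out inc bar V hbar_out hbar_inc x h)) := by
  rw [comp_assoc, trace_comp_comm', comp_assoc, comp_assoc]
  refine trace_comp_congr_heq V a (hbar_out h) (comp_congr_heq (hbar_out h) (hbar_inc h)
    (hbar_out h) ?_ (cast_heq _ _).symm)
  exact (cast_heq _ _).trans (congr_arg_heq x (hbar_invol h))

theorem quiverForm_comp_right [Fintype H] [∀ i, FiniteDimensional ℂ (V i)]
    (hbar_invol : Function.Involutive bar) (heps_bar : ∀ h, eps (bar h) = -eps h)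
    (a : ∀ i, V i →ₗ[ℂ] V i) (x : ∀ h, V (out h) →ₗ[ℂ] V (inc h)) :
    quiverForm out inc bar eps V hbar_out hbar_inc (fun h => (x h).comp (a (out h))) x
      = -quiverForm out inc bar eps V hbar_out hbar_inc (fun h => (a (inc h)).comp (x h)) x := by
  rw [quiverForm, ← Equiv.sum_comp (Function.Involutive.toPerm bar hbar_invol), quiverForm,
    ← Finset.sum_neg_distrib]
  refine Finset.sum_congr rfl fun h _ => ?_
  simp only [Function.Involutive.coe_toPerm, heps_bar, Int.cast_neg, neg_mul]
  exact congrArg (fun t => -((eps h : ℂ) * t))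
    (trace_comp_quiverOpposite_bar out inc bar V hbar_out hbar_inc hbar_invol a x h)

end Quiver

theorem quiverForm_bracket_eq_moment_map_general
    {I H : Type*} [Fintype I] [Fintype H] [DecidableEq I]
    (out inc : H → I) (bar : H → H) (eps : H → ℤ)
    (hbar_invol : ∀ h, bar (bar h) = h)
    (hbar_out : ∀ h, out (bar h) = inc h) (hbar_inc : ∀ h, inc (bar h) = out h)
    (heps_bar : ∀ h, eps (bar h) = -eps h)
    (V : I → Type*) [∀ i, AddCommGroup (V i)] [∀ i, Module ℂ (V i)]
    [∀ i, FiniteDimensional ℂ (V i)]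
    (a : ∀ i, V i →ₗ[ℂ] V i)
    (x : ∀ h, V (out h) →ₗ[ℂ] V (inc h)) :
    quiverForm out inc bar eps V hbar_out hbar_inc
        (fun h => (a (inc h)).comp (x h) - (x h).comp (a (out h))) x
      = 2 * ∑ i : I, LinearMap.trace ℂ (V i)
          ((a i).comp
            (quiverMomentMap out inc bar eps V hbar_out hbar_inc x i)) := by
  rw [quiverForm_sub_left, quiverForm_comp_right out inc bar eps V hbar_out hbar_inc hbar_invol
    heps_bar, quiverForm_comp_left]
  ring

/-- For `a = (a_i) ∈ gl_V` acting on `E_V` by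
`[a, x] h = a (inc h) ∘ x h - x h ∘ a (out h)`, one has
`⟨[a, x], x⟩ = 2 ∑_i tr (a i ∘ ψ_i (x))`: the map `ψ = (ψ_i)` is the moment map for
the `G_V`-action on the symplectic vector space `(E_V, ⟨·,·⟩)`. -/
theorem quiverForm_bracket_eq_moment_map
    {I H : Type*} [Fintype I] [Fintype H] [DecidableEq I]
    (out inc : H → I) (bar : H → H) (eps : H → ℤ)
    (hbar_invol : ∀ h, bar (bar h) = h) (hbar_ne : ∀ h, bar h ≠ h)
    (hbar_out : ∀ h, out (bar h) = inc h) (hbar_inc : ∀ h, inc (bar h) = out h)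
    (heps : ∀ h, eps h = 1 ∨ eps h = -1) (heps_bar : ∀ h, eps (bar h) = -eps h)
    (V : I → Type*) [∀ i, AddCommGroup (V i)] [∀ i, Module ℂ (V i)]
    [∀ i, FiniteDimensional ℂ (V i)]
    (a : ∀ i, V i →ₗ[ℂ] V i)
    (x : ∀ h, V (out h) →ₗ[ℂ] V (inc h)) :
    quiverForm out inc bar eps V hbar_out hbar_inc
        (fun h => (a (inc h)).comp (x h) - (x h).comp (a (out h))) x
      = 2 * ∑ i : I, LinearMap.trace ℂ (V i)
          ((a i).comp
            (quiverMomentMap out inc bar eps V hbar_out hbar_inc x i)) :=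
  quiverForm_bracket_eq_moment_map_general out inc bar eps hbar_invol hbar_out hbar_inc heps_bar V a
    x
end
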